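/- In the corresponding pure-CCS one-writer example (with read actions a̅ss/not modelled as handshakes rather than signals), the infinite path consisting solely of the reader's τ-loop (reading x forever, never performing the write) is ∅-just, hence just; so justness does not guarantee that the writer's action eventually occurs. -/

import Mathlib

/-!
Justness is a greatest fixed point, so it suffices to exhibit a family of pairs (path, blocking
set) closed under its clauses. The restriction adds `L ∪ L̄` to the blocking set, which makes the
writer's a̅ss(x,false) blocking: the writer may therefore stay idle along its empty path, which is
{a̅ss(x,false)}-just, while x_true and R keep handshaking on not(x,true) along infinite, hence
∅-just, paths. As x_true and R block nothing, the compatibility conditions X ∩ Z̄ = ∅ hold, and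
since pure CCS has no signals the signalling side conditions follow from the same decompositions.
-/

namespace CCSS

/-- Actions of CCS with signals: handshake names, conames, signal reads, and τ. -/
inductive Act (Name Sig : Type) : Type
  | name : Name → Act Name Sig
  | coname : Name → Act Name Sig
  | sig : Sig → Act Name Sig
  | tau : Act Name Sig

namespace Act
variable {Name Sig : Type}

/-- Relabelling applied to an action. -/
def comap (f : Name → Name) (g : Sig → Sig) : Act Name Sig → Act Name Sig
  | name a => name (f a)
  | coname a => coname (f a)
  | sig s => sig (g s)
  | tau => tau

/-- Whether an action is permitted under a restriction set `L` of names and signals. -/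
def allowed (L : Set (Name ⊕ Sig)) : Act Name Sig → Prop
  | name a => Sum.inl a ∉ L
  | coname a => Sum.inl a ∉ L
  | sig s => Sum.inr s ∉ L
  | tau => True

end Act

/-- Process expressions of CCS with signals. -/
inductive Proc (Name Sig Ident : Type) : Type 1
  | ident : Ident → Proc Name Sig Ident
  | pre : Act Name Sig → Proc Name Sig Ident → Proc Name Sig Ident
  | choice : (I : Type) → (I → Proc Name Sig Ident) → Proc Name Sig Ident
  | par : Proc Name Sig Ident → Proc Name Sig Ident → Proc Name Sig Ident
  | res : Proc Name Sig Ident → Set (Name ⊕ Sig) → Proc Name Sig Ident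
  | rel : Proc Name Sig Ident → (Name → Name) → (Sig → Sig) → Proc Name Sig Ident
  | sigop : Proc Name Sig Ident → Sig → Proc Name Sig Ident

variable {Name Sig Ident : Type}

/-- The inactive process 0. -/
def Proc.nil : Proc Name Sig Ident := .choice Empty (fun e => e.elim)

/-- Binary choice P + Q. -/
def Proc.cplus (P Q : Proc Name Sig Ident) : Proc Name Sig Ident :=
  .choice Bool (fun b => if b then P else Q)

/-- The signal-emission predicate P ↷ s. -/
inductive Emits (env : Ident → Proc Name Sig Ident) : Proc Name Sig Ident → Sig → Prop
  | sigop {P : Proc Name Sig Ident} {s : Sig} : Emits env (.sigop P s) s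
  | sigop_lift {P : Proc Name Sig Ident} {s t : Sig} :
      Emits env P s → Emits env (.sigop P t) s
  | choice {I : Type} {f : I → Proc Name Sig Ident} {j : I} {s : Sig} :
      Emits env (f j) s → Emits env (.choice I f) s
  | parL {P Q : Proc Name Sig Ident} {s : Sig} : Emits env P s → Emits env (.par P Q) s
  | parR {P Q : Proc Name Sig Ident} {s : Sig} : Emits env Q s → Emits env (.par P Q) s
  | res {P : Proc Name Sig Ident} {L : Set (Name ⊕ Sig)} {s : Sig} :
      Emits env P s → Sum.inr s ∉ L → Emits env (.res P L) s
  | rel {P : Proc Name Sig Ident} {f : Name → Name} {g : Sig → Sig} {s : Sig} :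
      Emits env P s → Emits env (.rel P f g) (g s)
  | ident {A : Ident} {s : Sig} : Emits env (env A) s → Emits env (.ident A) s

/-- The labelled transition relation of CCS with signals. -/
inductive Trans (env : Ident → Proc Name Sig Ident) :
    Proc Name Sig Ident → Act Name Sig → Proc Name Sig Ident → Prop
  | pre {α : Act Name Sig} {P : Proc Name Sig Ident} : Trans env (.pre α P) α P
  | choice {I : Type} {f : I → Proc Name Sig Ident} {j : I} {α P'} :
      Trans env (f j) α P' → Trans env (.choice I f) α P'
  | parL {P Q α P'} : Trans env P α P' → Trans env (.par P Q) α (.par P' Q)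
  | parR {P Q α Q'} : Trans env Q α Q' → Trans env (.par P Q) α (.par P Q')
  | sync1 {P Q a P' Q'} : Trans env P (.name a) P' → Trans env Q (.coname a) Q' →
      Trans env (.par P Q) .tau (.par P' Q')
  | sync2 {P Q a P' Q'} : Trans env P (.coname a) P' → Trans env Q (.name a) Q' →
      Trans env (.par P Q) .tau (.par P' Q')
  | sigL {P Q s Q'} : Emits env P s → Trans env Q (.sig s) Q' →
      Trans env (.par P Q) .tau (.par P Q')
  | sigR {P Q s P'} : Trans env P (.sig s) P' → Emits env Q s →
      Trans env (.par P Q) .tau (.par P' Q)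
  | res {P α P' L} : Trans env P α P' → Act.allowed L α → Trans env (.res P L) α (.res P' L)
  | rel {P α P' f g} : Trans env P α P' →
      Trans env (.rel P f g) (Act.comap f g α) (.rel P' f g)
  | ident {A α P'} : Trans env (env A) α P' → Trans env (.ident A) α P'

/-- A strong bisimulation for CCSS: matches transitions and emitted signals. -/
def IsBisimulation (env : Ident → Proc Name Sig Ident)
    (R : Proc Name Sig Ident → Proc Name Sig Ident → Prop) : Prop :=
  ∀ P Q, R P Q →
    (∀ α P', Trans env P α P' → ∃ Q', Trans env Q α Q' ∧ R P' Q') ∧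
    (∀ α Q', Trans env Q α Q' → ∃ P', Trans env P α P' ∧ R P' Q') ∧
    (∀ s, Emits env P s ↔ Emits env Q s)

/-- Strong bisimilarity on CCSS processes. -/
def Bisim (env : Ident → Proc Name Sig Ident) (P Q : Proc Name Sig Ident) : Prop :=
  ∃ R, IsBisimulation env R ∧ R P Q

end CCSS
namespace CCSS

variable {Name Sig Ident : Type}

/-- A (finite or infinite) path: `len` transitions, with `state n` and `act n`
the n-th state and action. For a finite path of length `k`, only positions
`n ≤ k` (states) and `n < k` (actions) are relevant. -/
structure Path (env : Ident → Proc Name Sig Ident) : Type 1 where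
  len : ℕ∞
  state : ℕ → Proc Name Sig Ident
  act : ℕ → Act Name Sig
  valid : ∀ n : ℕ, (n : ℕ∞) < len → Trans env (state n) (act n) (state (n + 1))

/-- The suffix of a path obtained by removing the first `k` transitions. -/
def Path.drop {env : Ident → Proc Name Sig Ident} (π : Path env) (k : ℕ) : Path env where
  len := π.len - k
  state n := π.state (n + k)
  act n := π.act (n + k)
  valid n h := by
    have h' : ((n + k : ℕ) : ℕ∞) < π.len := by
      have := lt_tsub_iff_right.mp h
      exact_mod_cast this
    have := π.valid (n + k) h'
    simpa [Nat.add_right_comm] using this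

/-- `IsParDecomp env π πP πQ` : the path `π` of a parallel composition decomposes
into the path `πP` of the left component and `πQ` of the right component.
`g n` (resp. `h n`) counts the transitions of the left (resp. right) component
among the first `n` transitions of `π`; in a signal communication the
decomposition along the emitting component is empty. -/
def IsParDecomp (env : Ident → Proc Name Sig Ident) (π πP πQ : Path env) : Prop :=
  ∃ g h : ℕ → ℕ, g 0 = 0 ∧ h 0 = 0 ∧
    (∀ n : ℕ, (n : ℕ∞) ≤ π.len →
      π.state n = .par (πP.state (g n)) (πQ.state (h n))) ∧
    (∀ n : ℕ, (n : ℕ∞) < π.len →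
      (g (n+1) = g n + 1 ∧ h (n+1) = h n ∧ πP.act (g n) = π.act n) ∨
      (g (n+1) = g n ∧ h (n+1) = h n + 1 ∧ πQ.act (h n) = π.act n) ∨
      (g (n+1) = g n + 1 ∧ h (n+1) = h n + 1 ∧ π.act n = .tau ∧
        ∃ a : Name, (πP.act (g n) = .name a ∧ πQ.act (h n) = .coname a) ∨
                    (πP.act (g n) = .coname a ∧ πQ.act (h n) = .name a)) ∨
      (g (n+1) = g n ∧ h (n+1) = h n + 1 ∧ π.act n = .tau ∧
        ∃ s : Sig, Emits env (πP.state (g n)) s ∧ πQ.act (h n) = .sig s) ∨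
      (g (n+1) = g n + 1 ∧ h (n+1) = h n ∧ π.act n = .tau ∧
        ∃ s : Sig, Emits env (πQ.state (h n)) s ∧ πP.act (g n) = .sig s)) ∧
    πP.len = (⨆ n : {n : ℕ // (n : ℕ∞) ≤ π.len}, ((g n.1 : ℕ) : ℕ∞)) ∧
    πQ.len = (⨆ n : {n : ℕ // (n : ℕ∞) ≤ π.len}, ((h n.1 : ℕ) : ℕ∞))

/-- Decomposition of a path of `P\L` into a path of `P`. -/
def IsResDecomp (env : Ident → Proc Name Sig Ident) (π π' : Path env)
    (L : Set (Name ⊕ Sig)) : Prop :=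
  π'.len = π.len ∧
  (∀ n : ℕ, (n : ℕ∞) ≤ π.len → π.state n = .res (π'.state n) L) ∧
  (∀ n : ℕ, (n : ℕ∞) < π.len → π'.act n = π.act n)

/-- Decomposition of a path of `P[f]` into a path of `P`. -/
def IsRelDecomp (env : Ident → Proc Name Sig Ident) (π π' : Path env)
    (f : Name → Name) (g : Sig → Sig) : Prop :=
  π'.len = π.len ∧
  (∀ n : ℕ, (n : ℕ∞) ≤ π.len → π.state n = .rel (π'.state n) f g) ∧
  (∀ n : ℕ, (n : ℕ∞) < π.len → π.act n = Act.comap f g (π'.act n))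

/-- The set of actions L ∪ L̄_H induced by a restriction set L. -/
def actsOf (L : Set (Name ⊕ Sig)) : Set (Act Name Sig) :=
  {α | ∃ a, Sum.inl a ∈ L ∧ (α = .name a ∨ α = .coname a)} ∪
  {α | ∃ s, Sum.inr s ∈ L ∧ α = .sig s}

/-- The defining clauses of the family of Y-signalling paths, as a closure
property of a family `C`; `Y`-signalling is the greatest such family. -/
def SignallingClosed (env : Ident → Proc Name Sig Ident)
    (C : Path env → Set Sig → Prop) : Prop :=
  ∀ π Y, C π Y →
    (∀ k : ℕ, π.len = (k : ℕ∞) → ∀ s, Emits env (π.state k) s → s ∈ Y) ∧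
    (∀ P Q, π.state 0 = .par P Q →
      ∃ πP πQ X Z, IsParDecomp env π πP πQ ∧ C πP X ∧ C πQ Z ∧ X ∪ Z ⊆ Y) ∧
    (∀ P L, π.state 0 = .res P L →
      ∃ π', IsResDecomp env π π' L ∧ C π' (Y ∪ {s | Sum.inr s ∈ L})) ∧
    (∀ P f g, π.state 0 = .rel P f g →
      ∃ π', IsRelDecomp env π π' f g ∧ C π' (g ⁻¹' Y)) ∧
    (∀ k : ℕ, C (π.drop k) Y)

/-- `π` is a `Y`-signalling path (coinductively: member of the largest class
closed under the defining clauses). -/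
def Signalling (env : Ident → Proc Name Sig Ident) (π : Path env) (Y : Set Sig) : Prop :=
  ∃ C, SignallingClosed env C ∧ C π Y

/-- The defining clauses of the family of Y-just paths, as a closure property
of a family `C`; `Y`-justness is the greatest such family. -/
def JustClosed (env : Ident → Proc Name Sig Ident)
    (C : Path env → Set (Act Name Sig) → Prop) : Prop :=
  ∀ π Y, C π Y →
    (∀ k : ℕ, π.len = (k : ℕ∞) → ∀ α P', Trans env (π.state k) α P' → α ∈ Y) ∧
    (∀ P Q, π.state 0 = .par P Q →
      ∃ πP πQ X Z X' Z', IsParDecomp env π πP πQ ∧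
        C πP X ∧ C πQ Z ∧ Signalling env πP X' ∧ Signalling env πQ Z' ∧
        X ∪ Z ⊆ Y ∧
        (∀ a : Name, Act.name a ∈ X → Act.coname a ∉ Z) ∧
        (∀ a : Name, Act.coname a ∈ X → Act.name a ∉ Z) ∧
        (∀ s ∈ Z', Act.sig s ∉ X) ∧
        (∀ s ∈ X', Act.sig s ∉ Z)) ∧
    (∀ P L, π.state 0 = .res P L →
      ∃ π', IsResDecomp env π π' L ∧ C π' (Y ∪ actsOf L)) ∧
    (∀ P f g, π.state 0 = .rel P f g →
      ∃ π', IsRelDecomp env π π' f g ∧ C π' (Act.comap f g ⁻¹' Y)) ∧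
    (∀ k : ℕ, C (π.drop k) Y)

/-- `π` is a `Y`-just path. -/
def Just (env : Ident → Proc Name Sig Ident) (π : Path env)
    (Y : Set (Act Name Sig)) : Prop :=
  ∃ C, JustClosed env C ∧ C π Y

/-- `π` is just: `Y`-just for some set `Y` of blocking actions (τ is non-blocking). -/
def IsJust (env : Ident → Proc Name Sig Ident) (π : Path env) : Prop :=
  ∃ Y : Set (Act Name Sig), Act.tau ∉ Y ∧ Just env π Y

end CCSS

namespace CCSS
namespace CCSOneWriter

/-- Pure CCS: notifications are handshake names, there are no signals. -/
inductive N | ass (b : Bool) | note (b : Bool)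
inductive Id | xT | xF | R | W

abbrev P7 := Proc N Empty Id

/-- x_true = ass(x,true).x_true + ass(x,false).x_false + n̅ot(x,true).x_true,
x_false symmetric, R = not(x,true).R, W = a̅ss(x,false).0. -/
def env : Id → P7
  | .xT => Proc.cplus (.pre (.name (.ass true)) (.ident .xT))
            (Proc.cplus (.pre (.name (.ass false)) (.ident .xF))
                        (.pre (.coname (.note true)) (.ident .xT)))
  | .xF => Proc.cplus (.pre (.name (.ass true)) (.ident .xT))
            (Proc.cplus (.pre (.name (.ass false)) (.ident .xF))
                        (.pre (.coname (.note false)) (.ident .xF)))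
  | .R => .pre (.name (.note true)) (.ident .R)
  | .W => .pre (.coname (.ass false)) Proc.nil

/-- L = {ass(x,true), ass(x,false), not(x,true), not(x,false)}. -/
def L : Set (N ⊕ Empty) := Set.univ

/-- The system (x_true | R | W)\L. -/
def Sys : P7 := .res (.par (.par (.ident .xT) (.ident .R)) (.ident .W)) L

end CCSOneWriter

section Paths

variable {Name Sig Ident : Type} {env : Ident → Proc Name Sig Ident}

def Path.loop (P : Proc Name Sig Ident) (α : Act Name Sig) (h : Trans env P α P) :
    Path env where
  len := ⊤
  state _ := P
  act _ := α
  valid _ _ := h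

def Path.nil (P : Proc Name Sig Ident) : Path env where
  len := 0
  state _ := P
  act _ := .tau
  valid _ h := absurd h (not_lt_zero)

@[simp]
lemma Path.loop_drop (P : Proc Name Sig Ident) (α : Act Name Sig) (h : Trans env P α P)
    (k : ℕ) : (Path.loop P α h).drop k = Path.loop P α h := by
  simp only [Path.drop, Path.loop, ENat.top_sub_natCast]

@[simp]
lemma Path.nil_drop (P : Proc Name Sig Ident) (k : ℕ) :
    (Path.nil P : Path env).drop k = Path.nil P := by
  simp only [Path.drop, Path.nil, zero_tsub]

lemma iSup_natCast_le_top : ⨆ n : {n : ℕ // (n : ℕ∞) ≤ ⊤}, ((n.1 : ℕ) : ℕ∞) = ⊤ :=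
  ENat.iSup_natCast_eq_top.2 fun ⟨b, hb⟩ =>
    b.not_succ_le_self (hb ⟨⟨b + 1, le_top⟩, rfl⟩)

lemma iSup_zero_le_top : ⨆ _ : {n : ℕ // (n : ℕ∞) ≤ ⊤}, ((0 : ℕ) : ℕ∞) = 0 := by
  simp

lemma IsParDecomp.loop_parL {P : Proc Name Sig Ident} {α : Act Name Sig}
    (hP : Trans env P α P) (Q : Proc Name Sig Ident) :
    IsParDecomp env (Path.loop (.par P Q) α (.parL hP)) (Path.loop P α hP) (Path.nil Q) :=
  ⟨id, fun _ => 0, rfl, rfl, fun _ _ => rfl, fun _ _ => Or.inl ⟨rfl, rfl, rfl⟩,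
    iSup_natCast_le_top.symm, iSup_zero_le_top.symm⟩

lemma IsParDecomp.loop_sync2 {P Q : Proc Name Sig Ident} {a : Name}
    (hP : Trans env P (.coname a) P) (hQ : Trans env Q (.name a) Q) :
    IsParDecomp env (Path.loop (.par P Q) .tau (.sync2 hP hQ)) (Path.loop P _ hP)
      (Path.loop Q _ hQ) :=
  ⟨id, id, rfl, rfl, fun _ _ => rfl,
    fun _ _ => Or.inr (Or.inr (Or.inl ⟨rfl, rfl, rfl, a, Or.inr ⟨rfl, rfl⟩⟩)),
    iSup_natCast_le_top.symm, iSup_natCast_le_top.symm⟩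

lemma IsResDecomp.loop {P : Proc Name Sig Ident} {α : Act Name Sig} {L : Set (Name ⊕ Sig)}
    (hP : Trans env P α P) (hα : α.allowed L) :
    IsResDecomp env (Path.loop (.res P L) α (.res hP hα)) (Path.loop P α hP) L :=
  ⟨rfl, fun _ _ => rfl, fun _ _ => rfl⟩

end Paths

namespace CCSOneWriter

abbrev memReader : P7 := .par (.ident .xT) (.ident .R)

lemma reader_step : Trans env (.ident .R) (.name (.note true)) (.ident .R) :=
  .ident .pre

lemma memory_step : Trans env (.ident .xT) (.coname (.note true)) (.ident .xT) :=
  .ident (.choice (j := false) (.choice (j := false) .pre))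

lemma memReader_step : Trans env memReader .tau memReader :=
  .sync2 memory_step reader_step

lemma sys_step : Trans env Sys .tau Sys :=
  .res (.parL memReader_step) trivial

inductive ReaderLoop : Path env → Set (Act N Empty) → Prop
  | sys : ReaderLoop (Path.loop Sys .tau sys_step) ∅
  | body : ReaderLoop (Path.loop (.par memReader (.ident .W)) .tau (.parL memReader_step))
      (actsOf L)
  | memReader : ReaderLoop (Path.loop memReader .tau memReader_step) ∅
  | memory : ReaderLoop (Path.loop (.ident .xT) _ memory_step) ∅
  | reader : ReaderLoop (Path.loop (.ident .R) _ reader_step) ∅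
  | writer : ReaderLoop (Path.nil (.ident .W)) {.coname (.ass false)}

namespace ReaderLoop

variable {π : Path env} {Y : Set (Act N Empty)}

lemma drop (h : ReaderLoop π Y) (k : ℕ) : ReaderLoop (π.drop k) Y := by
  cases h <;> simp only [Path.loop_drop, Path.nil_drop] <;> constructor

lemma final (h : ReaderLoop π Y) {k : ℕ} (hk : π.len = k) {α : Act N Empty} {P' : P7}
    (hT : Trans env (π.state k) α P') : α ∈ Y := by
  cases h
  case writer =>
    cases hT with
    | ident hT => cases hT; rfl
  all_goals exact absurd hk (ENat.top_ne_natCast k)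

lemma par (h : ReaderLoop π Y) {P Q : P7} (h0 : π.state 0 = .par P Q) :
    ∃ πP πQ Z, IsParDecomp env π πP πQ ∧ ReaderLoop πP ∅ ∧ ReaderLoop πQ Z ∧ Z ⊆ Y := by
  cases h
  case body =>
    refine ⟨_, _, _, .loop_parL memReader_step _, .memReader, .writer, ?_⟩
    rintro _ rfl
    exact Or.inl ⟨.ass false, trivial, Or.inr rfl⟩
  case memReader =>
    exact ⟨_, _, _, .loop_sync2 memory_step reader_step, .memory, .reader, subset_rfl⟩
  all_goals cases h0

lemma res (h : ReaderLoop π Y) {P : P7} {L' : Set (N ⊕ Empty)} (h0 : π.state 0 = .res P L') :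
    ∃ π', IsResDecomp env π π' L' ∧ ReaderLoop π' (Y ∪ actsOf L') := by
  cases h
  case sys =>
    cases h0
    exact ⟨_, .loop (.parL memReader_step) trivial, by simpa using ReaderLoop.body⟩
  all_goals cases h0

lemma state_zero_ne_rel (h : ReaderLoop π Y) (P : P7) (f : N → N) (g : Empty → Empty) :
    π.state 0 ≠ .rel P f g := by
  cases h <;> nofun

end ReaderLoop

lemma signallingClosed_readerLoop :
    SignallingClosed env (fun π _ => ∃ Y, ReaderLoop π Y) := by
  rintro π - ⟨Y, h⟩
  refine ⟨fun _ _ s => s.elim, fun P Q h0 => ?_, fun P L' h0 => ?_,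
    fun P f g h0 => absurd h0 (h.state_zero_ne_rel P f g), fun k => ⟨Y, h.drop k⟩⟩
  · obtain ⟨πP, πQ, Z, hπ, hP, hQ, -⟩ := h.par h0
    exact ⟨πP, πQ, ∅, ∅, hπ, ⟨_, hP⟩, ⟨Z, hQ⟩, by simp⟩
  · obtain ⟨π', hπ', h'⟩ := h.res h0
    exact ⟨π', hπ', _, h'⟩

lemma justClosed_readerLoop : JustClosed env ReaderLoop := by
  intro π Y h
  refine ⟨fun k hk α P' => h.final hk, fun P Q h0 => ?_, fun P L' h0 => h.res h0,
    fun P f g h0 => absurd h0 (h.state_zero_ne_rel P f g), h.drop⟩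
  obtain ⟨πP, πQ, Z, hπ, hP, hQ, hZ⟩ := h.par h0
  exact ⟨πP, πQ, ∅, Z, ∅, ∅, hπ, hP, hQ, ⟨_, signallingClosed_readerLoop, _, hP⟩,
    ⟨_, signallingClosed_readerLoop, _, hQ⟩, by simpa using hZ, nofun, nofun, nofun, nofun⟩

/-- the infinite path consisting solely of the reader's τ-loop
(every state is the initial system, every action τ, so the writer never acts)
is ∅-just, hence just: justness does not guarantee that the write occurs. -/
theorem reader_loop_is_just :
    ∃ π : Path env, π.len = ⊤ ∧ (∀ n, π.state n = Sys) ∧ (∀ n, π.act n = .tau) ∧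
      Just env π ∅ ∧ IsJust env π := by
  have hjust : Just env (Path.loop Sys .tau sys_step) ∅ :=
    ⟨ReaderLoop, justClosed_readerLoop, .sys⟩
  exact ⟨_, rfl, fun _ => rfl, fun _ => rfl, hjust, ∅, Set.notMem_empty _, hjust⟩

end CCSOneWriter
end CCSS
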